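/- For positive trace-class operators ρ, σ on a finite-dimensional Hilbert space and λ ∈ [0,1], the von Neumann entropy satisfies H(λρ + (1−λ)σ) ≤ λH(ρ) + (1−λ)H(σ) + max{Tr ρ, Tr σ} · h₂(λ), where h₂(λ) = −λ log λ − (1−λ) log(1−λ) is the binary entropy. -/

import Mathlib

/-!
The heart of the proof is trace subadditivity of `η(x) = -x log x`: for `A, B ⪰ 0`,
`Tr η(A + B) ≤ Tr η(A) + Tr η(B)`. Writing `T = A + B`, it suffices that `-Tr(A log T) ≤ Tr η(A)`
whenever `A ≤ T`, i.e. the trace form of the operator monotonicity of `log`. In an eigenbasis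
`(uᵢ, tᵢ)` of `T` and `(vⱼ, aⱼ)` of `A`, the weights `dᵢⱼ = |⟨uᵢ, vⱼ⟩|²` are column-stochastic, and
`A ≤ T` gives both `aⱼ dᵢⱼ ≤ tᵢ` and `aⱼ ∑ᵢ dᵢⱼ / tᵢ ≤ 1`; Jensen's inequality for the concave `η`
with the sub-probability weights `aⱼ dᵢⱼ / tᵢ` then bounds each column by `η(aⱼ)`.

Applied to `A = λρ`, `B = (1-λ)σ`, the identity `η(ca) = c η(a) + a η(c)` produces
`λ Tr η(ρ) + (1-λ) Tr η(σ) + η(λ) Tr ρ + η(1-λ) Tr σ`; concavity of `η` takes care of the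
normalising terms `η(Tr ·)`, and `η(λ) Tr ρ + η(1-λ) Tr σ ≤ max(Tr ρ, Tr σ) h₂(λ)`.
-/

open Matrix
open scoped ComplexOrder

noncomputable section

/-- The von Neumann entropy, extended to the cone of positive trace-class operators by
`H(ρ) = Tr η(ρ) − η(Tr ρ)` with `η(x) = −x log x` (computed spectrally). -/
def vnEnt {n : Type*} [Fintype n] [DecidableEq n] (ρ : Matrix n n ℂ) : ℝ :=
  if h : ρ.IsHermitian then
    (∑ i, Real.negMulLog (h.eigenvalues i)) - Real.negMulLog (∑ i, h.eigenvalues i)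
  else 0

/-- A state (density operator): positive semidefinite with unit trace. -/
def IsState {n : Type*} [Fintype n] (ρ : Matrix n n ℂ) : Prop :=
  ρ.PosSemidef ∧ ρ.trace = 1

open Real Finset

namespace Real

lemma sum_mul_negMulLog_le_negMulLog_sum {ι : Type*} {s : Finset ι} {w p : ι → ℝ}
    (hw : ∀ i ∈ s, 0 ≤ w i) (hw1 : ∑ i ∈ s, w i ≤ 1) (hp : ∀ i ∈ s, 0 ≤ p i) :
    ∑ i ∈ s, w i * negMulLog (p i) ≤ negMulLog (∑ i ∈ s, w i * p i) := by
  set W := ∑ i ∈ s, w i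
  obtain hW | hW := (show 0 ≤ W from sum_nonneg hw).eq_or_lt
  · have hw0 : ∀ i ∈ s, w i = 0 := (sum_eq_zero_iff_of_nonneg hw).1 hW.symm
    simp +contextual [sum_eq_zero, hw0]
  have hJ := concaveOn_negMulLog.le_map_sum (t := s) (w := fun i => w i / W) (p := p)
    (fun i hi => div_nonneg (hw i hi) hW.le) (by rw [← sum_div, div_self hW.ne']) hp
  set x := ∑ i ∈ s, (w i / W) • p i
  have hx : W * x = ∑ i ∈ s, w i * p i := by
    simp only [x, mul_sum, smul_eq_mul]
    exact sum_congr rfl fun i _ => by field_simp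
  have hscale : W * negMulLog x ≤ negMulLog (W * x) := by
    have hx0 : 0 ≤ x := sum_nonneg fun i hi => smul_nonneg (div_nonneg (hw i hi) hW.le) (hp i hi)
    rw [negMulLog_mul]
    nlinarith [negMulLog_nonneg hW.le hw1]
  calc ∑ i ∈ s, w i * negMulLog (p i) = W * ∑ i ∈ s, (w i / W) • negMulLog (p i) := by
        simp only [mul_sum, smul_eq_mul]
        exact sum_congr rfl fun i _ => by field_simp
    _ ≤ W * negMulLog x := mul_le_mul_of_nonneg_left hJ hW.le
    _ ≤ negMulLog (∑ i ∈ s, w i * p i) := hx ▸ hscale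

lemma sum_mul_mul_neg_log_le_negMulLog {ι : Type*} {s : Finset ι} {d t : ι → ℝ} {a : ℝ}
    (ha : 0 ≤ a) (hd : ∀ i ∈ s, 0 ≤ d i) (hd1 : ∑ i ∈ s, d i = 1)
    (hdt : ∀ i ∈ s, a * d i ≤ t i) (hinv : a * ∑ i ∈ s, d i / t i ≤ 1) :
    ∑ i ∈ s, a * d i * -log (t i) ≤ negMulLog a := by
  have ht : ∀ i ∈ s, 0 ≤ t i := fun i hi => (mul_nonneg ha (hd i hi)).trans (hdt i hi)
  have hJ := sum_mul_negMulLog_le_negMulLog_sum (s := s) (w := fun i => a * d i / t i) (p := t)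
    (fun i hi => div_nonneg (mul_nonneg ha (hd i hi)) (ht i hi))
    (by simpa only [mul_sum, mul_div_assoc] using hinv) ht
  have hterm : ∀ i ∈ s, a * d i / t i * negMulLog (t i) = a * d i * -log (t i) := by
    intro i hi
    rcases (ht i hi).eq_or_lt with h0 | hpos
    · simp [← h0]
    · rw [negMulLog]; field_simp
  have hmass : ∀ i ∈ s, a * d i / t i * t i = a * d i := by
    intro i hi
    rcases (ht i hi).eq_or_lt with h0 | hpos
    · have : a * d i = 0 := le_antisymm (h0 ▸ hdt i hi) (mul_nonneg ha (hd i hi))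
      simp [this]
    · field_simp
  rwa [sum_congr rfl hterm, sum_congr rfl hmass, ← mul_sum, hd1, mul_one] at hJ

lemma sum_negMulLog_const_mul {ι : Type*} (s : Finset ι) (c : ℝ) (a : ι → ℝ) :
    ∑ i ∈ s, negMulLog (c * a i)
      = c * ∑ i ∈ s, negMulLog (a i) + negMulLog c * ∑ i ∈ s, a i := by
  simp only [negMulLog_mul, mul_sum, ← sum_add_distrib]
  exact sum_congr rfl fun i _ => by ring

end Real

namespace Matrix

variable {𝕜 : Type*} [RCLike 𝕜] {n : Type*} [Fintype n] [DecidableEq n]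

lemma sum_norm_sq_apply_eq_one_of_mem_unitaryGroup {W : Matrix n n 𝕜}
    (hW : W ∈ unitaryGroup n 𝕜) (j : n) : ∑ i, ‖W i j‖ ^ 2 = 1 := by
  have h := congr_fun₂ (mem_unitaryGroup_iff'.mp hW) j j
  simp only [mul_apply, star_apply, RCLike.star_def, RCLike.conj_mul, one_apply_eq] at h
  exact_mod_cast h

lemma mul_diagonal_mul_conjTranspose_apply_self (W : Matrix n n 𝕜) (f : n → ℝ) (i : n) :
    (W * diagonal (RCLike.ofReal ∘ f) * Wᴴ : Matrix n n 𝕜) i i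
      = ((∑ k, f k * ‖W i k‖ ^ 2 : ℝ) : 𝕜) := by
  rw [mul_apply]
  simp only [mul_diagonal, conjTranspose_apply, RCLike.star_def, Function.comp_apply]
  push_cast
  exact sum_congr rfl fun k _ => by rw [mul_right_comm, RCLike.mul_conj, mul_comm]

lemma dotProduct_diagonal_mulVec_ofReal (f : n → ℝ) (v : n → 𝕜) :
    star v ⬝ᵥ (diagonal (RCLike.ofReal ∘ f) *ᵥ v) = ((∑ i, f i * ‖v i‖ ^ 2 : ℝ) : 𝕜) := by
  simp only [dotProduct, mulVec_diagonal, Pi.star_apply, RCLike.star_def, Function.comp_apply]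
  push_cast
  exact sum_congr rfl fun i _ => by rw [mul_left_comm, RCLike.conj_mul]

lemma dotProduct_mul_diagonal_mul_conjTranspose_mulVec (W : Matrix n n 𝕜) (f : n → ℝ)
    (v : n → 𝕜) :
    star v ⬝ᵥ ((W * diagonal (RCLike.ofReal ∘ f) * Wᴴ) *ᵥ v)
      = ((∑ k, f k * ‖(Wᴴ *ᵥ v) k‖ ^ 2 : ℝ) : 𝕜) := by
  rw [← dotProduct_diagonal_mulVec_ofReal, star_mulVec, conjTranspose_conjTranspose,
    ← dotProduct_mulVec, mulVec_mulVec, mulVec_mulVec]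

lemma sum_mul_norm_sq_le_of_posSemidef_diagonal_sub {t a : n → ℝ} {W : Matrix n n 𝕜}
    (h : (diagonal (RCLike.ofReal ∘ t) - W * diagonal (RCLike.ofReal ∘ a) * Wᴴ).PosSemidef)
    (i : n) : ∑ k, a k * ‖W i k‖ ^ 2 ≤ t i := by
  have := (RCLike.nonneg_iff.mp (h.diag_nonneg (i := i))).1
  simpa [mul_diagonal_mul_conjTranspose_apply_self] using this

lemma mul_sum_norm_sq_div_le_one_of_posSemidef_diagonal_sub {t a : n → ℝ} {W : Matrix n n 𝕜}
    (ha : ∀ k, 0 ≤ a k)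
    (h : (diagonal (RCLike.ofReal ∘ t) - W * diagonal (RCLike.ofReal ∘ a) * Wᴴ).PosSemidef)
    (j : n) : a j * ∑ i, ‖W i j‖ ^ 2 / t i ≤ 1 := by
  set K := ∑ i, ‖W i j‖ ^ 2 / t i
  -- test `h` against `v = D⁻¹ w`, where `w` is column `j` of `W` and `D = diagonal t`
  set v : n → 𝕜 := fun i => ((t i)⁻¹ : 𝕜) * W i j
  have hD : ∑ i, t i * ‖v i‖ ^ 2 = K := by
    refine sum_congr rfl fun i _ => ?_
    rcases eq_or_ne (t i) 0 with h0 | h0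
    · simp [v, h0]
    · simp only [v, norm_mul, norm_inv, RCLike.norm_ofReal]
      rw [mul_pow, inv_pow, sq_abs]
      field_simp
  have hWv : (Wᴴ *ᵥ v) j = (K : 𝕜) := by
    simp only [mulVec, dotProduct, conjTranspose_apply, RCLike.star_def, v, K]
    push_cast
    refine sum_congr rfl fun i _ => ?_
    rw [mul_left_comm, RCLike.conj_mul, div_eq_inv_mul]
  have hquad := h.re_dotProduct_nonneg v
  rw [sub_mulVec, dotProduct_sub, map_sub, dotProduct_diagonal_mulVec_ofReal,
    dotProduct_mul_diagonal_mul_conjTranspose_mulVec, RCLike.ofReal_re, RCLike.ofReal_re,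
    hD, sub_nonneg] at hquad
  have hj : a j * K ^ 2 ≤ K := by
    refine le_trans ?_ hquad
    have := single_le_sum (f := fun k => a k * ‖(Wᴴ *ᵥ v) k‖ ^ 2)
      (fun k _ => mul_nonneg (ha k) (sq_nonneg _)) (mem_univ j)
    simpa [hWv, RCLike.norm_ofReal, sq_abs] using this
  rcases ((mul_nonneg (ha j) (sq_nonneg K)).trans hj).eq_or_lt with hK | hK
  · simp [← hK]
  · nlinarith

theorem sum_mul_neg_log_le_sum_negMulLog_of_posSemidef_diagonal_sub {t a : n → ℝ}
    {W : Matrix n n 𝕜} (hW : W ∈ unitaryGroup n 𝕜) (ha : ∀ j, 0 ≤ a j)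
    (h : (diagonal (RCLike.ofReal ∘ t) - W * diagonal (RCLike.ofReal ∘ a) * Wᴴ).PosSemidef) :
    ∑ i, (∑ j, a j * ‖W i j‖ ^ 2) * -log (t i) ≤ ∑ j, negMulLog (a j) := by
  have hdt : ∀ i j, a j * ‖W i j‖ ^ 2 ≤ t i := fun i j =>
    (single_le_sum (f := fun k => a k * ‖W i k‖ ^ 2)
      (fun k _ => mul_nonneg (ha k) (sq_nonneg _)) (mem_univ j)).trans
      (sum_mul_norm_sq_le_of_posSemidef_diagonal_sub h i)
  calc ∑ i, (∑ j, a j * ‖W i j‖ ^ 2) * -log (t i)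
      = ∑ j, ∑ i, a j * ‖W i j‖ ^ 2 * -log (t i) := by
        simp only [sum_mul]; exact sum_comm
    _ ≤ ∑ j, negMulLog (a j) := sum_le_sum fun j _ =>
        sum_mul_mul_neg_log_le_negMulLog (ha j) (fun i _ => sq_nonneg _)
          (sum_norm_sq_apply_eq_one_of_mem_unitaryGroup hW j) (fun i _ => hdt i j)
          (mul_sum_norm_sq_div_le_one_of_posSemidef_diagonal_sub ha h j)

namespace IsHermitian

lemma star_eigenvectorUnitary_mul_mul_self {A : Matrix n n 𝕜} (hA : A.IsHermitian) :
    star (hA.eigenvectorUnitary : Matrix n n 𝕜) * A * (hA.eigenvectorUnitary : Matrix n n 𝕜)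
      = diagonal (RCLike.ofReal ∘ hA.eigenvalues) := by
  rw [← Unitary.conjStarAlgAut_star_apply (S := 𝕜), conjStarAlgAut_star_eigenvectorUnitary]

theorem sum_mul_re_diag_mul_neg_log_le_of_posSemidef_sub_smul {ρ T : Matrix n n 𝕜}
    (hρ : ρ.PosSemidef) (hT : T.IsHermitian) {c : ℝ} (hc : 0 ≤ c) (hle : (T - c • ρ).PosSemidef) :
    ∑ i, c * RCLike.re ((star (hT.eigenvectorUnitary : Matrix n n 𝕜) * ρ
        * (hT.eigenvectorUnitary : Matrix n n 𝕜)) i i) * -log (hT.eigenvalues i)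
      ≤ ∑ j, negMulLog (c * hρ.1.eigenvalues j) := by
  set U : Matrix n n 𝕜 := (hT.eigenvectorUnitary : Matrix n n 𝕜)
  set W : Matrix n n 𝕜 := star U * (hρ.1.eigenvectorUnitary : Matrix n n 𝕜)
  have hW : W ∈ unitaryGroup n 𝕜 :=
    Submonoid.mul_mem _ (Unitary.star_mem hT.eigenvectorUnitary.2) hρ.1.eigenvectorUnitary.2
  have hρW : star U * ρ * U = W * diagonal (RCLike.ofReal ∘ hρ.1.eigenvalues) * Wᴴ := by
    conv_lhs => rw [hρ.1.spectral_theorem, Unitary.conjStarAlgAut_apply]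
    simp only [W, ← star_eq_conjTranspose, star_mul, star_star, Matrix.mul_assoc]
  have hle' : (diagonal (RCLike.ofReal ∘ hT.eigenvalues)
      - W * diagonal (RCLike.ofReal ∘ fun j => c * hρ.1.eigenvalues j) * Wᴴ).PosSemidef := by
    convert hle.conjTranspose_mul_mul_same U using 1
    rw [Matrix.mul_sub, Matrix.sub_mul, Matrix.mul_smul, Matrix.smul_mul,
      ← star_eq_conjTranspose U, hT.star_eigenvectorUnitary_mul_mul_self, hρW]
    have hscale : diagonal (RCLike.ofReal ∘ fun j => c * hρ.1.eigenvalues j)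
        = c • diagonal (RCLike.ofReal ∘ hρ.1.eigenvalues : n → 𝕜) := by
      rw [← diagonal_smul]
      congr 1
      ext j
      simp [RCLike.real_smul_eq_coe_mul]
    rw [hscale, Matrix.mul_smul, Matrix.smul_mul]
  refine le_of_eq_of_le ?_ (sum_mul_neg_log_le_sum_negMulLog_of_posSemidef_diagonal_sub hW
    (fun j => mul_nonneg hc (hρ.eigenvalues_nonneg j)) hle')
  refine sum_congr rfl fun i _ => ?_
  rw [hρW, mul_diagonal_mul_conjTranspose_apply_self, RCLike.ofReal_re, mul_sum]
  simp only [mul_assoc]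

lemma re_trace_eq_sum_eigenvalues {A : Matrix n n 𝕜} (hA : A.IsHermitian) :
    RCLike.re A.trace = ∑ i, hA.eigenvalues i := by
  simp [hA.trace_eq_sum_eigenvalues]

end IsHermitian

theorem sum_negMulLog_eigenvalues_smul_add_smul_le {ρ σ : Matrix n n 𝕜} (hρ : ρ.PosSemidef)
    (hσ : σ.PosSemidef) {c e : ℝ} (hc : 0 ≤ c) (he : 0 ≤ e) (hT : (c • ρ + e • σ).IsHermitian) :
    ∑ i, negMulLog (hT.eigenvalues i)
      ≤ ∑ j, negMulLog (c * hρ.1.eigenvalues j) + ∑ j, negMulLog (e * hσ.1.eigenvalues j) := by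
  set U : Matrix n n 𝕜 := (hT.eigenvectorUnitary : Matrix n n 𝕜)
  have ht : ∀ i, hT.eigenvalues i
      = c * RCLike.re ((star U * ρ * U) i i) + e * RCLike.re ((star U * σ * U) i i) := by
    intro i
    have := congr_arg (fun M => RCLike.re (M i i)) hT.star_eigenvectorUnitary_mul_mul_self
    simpa [Matrix.mul_add, Matrix.add_mul, Matrix.mul_smul, Matrix.smul_mul, RCLike.smul_re] using
      this.symm
  calc ∑ i, negMulLog (hT.eigenvalues i)
      = ∑ i, c * RCLike.re ((star U * ρ * U) i i) * -log (hT.eigenvalues i)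
        + ∑ i, e * RCLike.re ((star U * σ * U) i i) * -log (hT.eigenvalues i) := by
        rw [← sum_add_distrib]
        refine sum_congr rfl fun i _ => ?_
        rw [negMulLog]
        nth_rewrite 1 [ht i]
        ring
    _ ≤ _ := by
        have hρ' : (c • ρ + e • σ - e • σ).PosSemidef := by
          rw [add_sub_cancel_right]; exact hρ.smul hc
        have hσ' : (c • ρ + e • σ - c • ρ).PosSemidef := by
          rw [add_sub_cancel_left]; exact hσ.smul he
        exact add_le_add (hT.sum_mul_re_diag_mul_neg_log_le_of_posSemidef_sub_smul hρ hc hσ')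
          (hT.sum_mul_re_diag_mul_neg_log_le_of_posSemidef_sub_smul hσ he hρ')

end Matrix

/-- Almost-concavity of the von Neumann entropy:
`H(λρ + (1−λ)σ) ≤ λH(ρ) + (1−λ)H(σ) + max{Tr ρ, Tr σ}·h₂(λ)`. -/
theorem vnEnt_convex_combination_le {n : Type*} [Fintype n] [DecidableEq n]
    (ρ σ : Matrix n n ℂ) (hρ : ρ.PosSemidef) (hσ : σ.PosSemidef)
    (l : ℝ) (h0 : 0 ≤ l) (h1 : l ≤ 1) :
    vnEnt (l • ρ + (1 - l) • σ)
      ≤ l * vnEnt ρ + (1 - l) * vnEnt σ + max ρ.trace.re σ.trace.re * Real.binEntropy l := by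
  have h0' : 0 ≤ 1 - l := by linarith
  have hT := ((hρ.smul h0).add (hσ.smul h0')).1
  have hsub := Matrix.sum_negMulLog_eigenvalues_smul_add_smul_le hρ hσ h0 h0' hT
  rw [sum_negMulLog_const_mul, sum_negMulLog_const_mul, ← hρ.1.re_trace_eq_sum_eigenvalues,
    ← hσ.1.re_trace_eq_sum_eigenvalues] at hsub
  have htr : ∑ i, hT.eigenvalues i = l * ρ.trace.re + (1 - l) * σ.trace.re := by
    rw [← hT.re_trace_eq_sum_eigenvalues]
    simp [trace_add, trace_smul]
  have hconc : l * negMulLog ρ.trace.re + (1 - l) * negMulLog σ.trace.re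
      ≤ negMulLog (l * ρ.trace.re + (1 - l) * σ.trace.re) :=
    concaveOn_negMulLog.2 (RCLike.nonneg_iff.mp hρ.trace_nonneg).1
      (RCLike.nonneg_iff.mp hσ.trace_nonneg).1 h0 h0' (by ring)
  have hbin : negMulLog l * ρ.trace.re + negMulLog (1 - l) * σ.trace.re
      ≤ max ρ.trace.re σ.trace.re * binEntropy l := by
    rw [binEntropy_eq_negMulLog_add_negMulLog_one_sub]
    nlinarith [negMulLog_nonneg h0 h1, negMulLog_nonneg h0' (by linarith : 1 - l ≤ 1),
      le_max_left ρ.trace.re σ.trace.re, le_max_right ρ.trace.re σ.trace.re]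
  rw [vnEnt, vnEnt, vnEnt, dif_pos hT, dif_pos hρ.1, dif_pos hσ.1, htr,
    ← hρ.1.re_trace_eq_sum_eigenvalues, ← hσ.1.re_trace_eq_sum_eigenvalues]
  simp only [RCLike.re_to_complex] at hsub ⊢
  linarith
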